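/- arXiv:2505.04580 — 2 statements merged into one kernel-verified Lean document; each statement's English description precedes it below -/
import Mathlib

section
/- Let m, n > 1, let p ∈ [1,∞], and let M ∈ ℝ^{n×m} have all row sums equal. Then the induced consensus seminorm satisfies ⟨M⟩_p ≤ |M|_p, where |M|_p is the metric consensus seminorm of M. -/
open Matrix Finset
open scoped ENNReal

noncomputable def matPNorm (p : ℝ≥0∞) [Fact (1 ≤ p)] {n m : ℕ}
    (M : Matrix (Fin n) (Fin m) ℝ) : ℝ :=
  ‖LinearMap.toContinuousLinearMap
    (Matrix.toLin (PiLp.basisFun p ℝ (Fin m)) (PiLp.basisFun p ℝ (Fin n)) M)‖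

noncomputable def metricSN (p : ℝ≥0∞) [Fact (1 ≤ p)] {n m : ℕ}
    (M : Matrix (Fin n) (Fin m) ℝ) : ℝ :=
  ⨅ c : Fin m → ℝ, matPNorm p (M - Matrix.of fun _ j => c j)

noncomputable def vecSN (p : ℝ≥0∞) [Fact (1 ≤ p)] {m : ℕ} (x : Fin m → ℝ) : ℝ :=
  ⨅ c : ℝ, ‖(WithLp.equiv p (Fin m → ℝ)).symm (x - fun _ => c)‖

noncomputable def inducedSN (p : ℝ≥0∞) [Fact (1 ≤ p)] {n m : ℕ}
    (M : Matrix (Fin n) (Fin m) ℝ) : ℝ :=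
  sSup {r | ∃ x : Fin m → ℝ, vecSN p x = 1 ∧ r = vecSN p (M.mulVec x)}

noncomputable def coeErg {n : ℕ} (M : Matrix (Fin n) (Fin n) ℝ) : ℝ :=
  (1 / 2) * ⨆ i : Fin n, ⨆ j : Fin n, ∑ k, |M i k - M j k|

def IsStochastic {n : ℕ} (S : Matrix (Fin n) (Fin n) ℝ) : Prop :=
  (∀ i j, 0 ≤ S i j) ∧ ∀ i, ∑ j, S i j = 1

def IsScrambling {n : ℕ} (S : Matrix (Fin n) (Fin n) ℝ) : Prop :=
  IsStochastic S ∧ ∀ i j, ∃ k, 0 < S i k ∧ 0 < S j k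

def EqRowSum (n m : ℕ) : Submodule ℝ (Matrix (Fin n) (Fin m) ℝ) where
  carrier := {M | ∀ i i', ∑ j, M i j = ∑ j, M i' j}
  add_mem' := by
    intro A B hA hB i i'
    simp only [Matrix.add_apply, Finset.sum_add_distrib, hA i i', hB i i']
  zero_mem' := by intro i i'; simp
  smul_mem' := by
    intro c A hA i i'
    simp only [Matrix.smul_apply, smul_eq_mul, ← Finset.mul_sum, hA i i']

noncomputable def prodSeq {n : ℕ} (M : ℕ → Matrix (Fin n) (Fin n) ℝ) :
    ℕ → Matrix (Fin n) (Fin n) ℝ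
  | 0 => 1
  | (i + 1) => M i * prodSeq M i

/-!
Write `𝟏 c` for the matrix all of whose rows are `c`. Since the rows of `M` have a common
sum, `(M - 𝟏 c)(x - d 𝟏)` differs from `M x` by a constant vector for every `c` and `d`. Hence
`|M x|_p ≤ ‖M - 𝟏 c‖_p ‖x - d 𝟏‖_p`, and minimising over `d` and then over `c` gives
`|M x|_p ≤ |M|_p |x|_p`.
-/

lemma toLin_basisFun_apply (p : ℝ≥0∞) {n m : ℕ} (M : Matrix (Fin n) (Fin m) ℝ)
    (v : PiLp p (fun _ : Fin m => ℝ)) :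
    Matrix.toLin (PiLp.basisFun p ℝ (Fin m)) (PiLp.basisFun p ℝ (Fin n)) M v
      = (WithLp.equiv p (Fin n → ℝ)).symm (M *ᵥ WithLp.equiv p (Fin m → ℝ) v) := by
  apply (PiLp.basisFun p ℝ (Fin n)).equivFun.injective
  ext i
  simp [Matrix.toLin_apply, Matrix.mulVec, dotProduct, Pi.single_apply]

lemma mulVec_sub_mulVec_sub_const_apply_eq {n m : ℕ} {M : Matrix (Fin n) (Fin m) ℝ}
    (h : ∀ i i', ∑ j, M i j = ∑ j, M i' j) (c x : Fin m → ℝ) (d : ℝ) (i i' : Fin n) :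
    (M *ᵥ x) i - ((M - of fun _ j => c j) *ᵥ (x - fun _ => d)) i
      = (M *ᵥ x) i' - ((M - of fun _ j => c j) *ᵥ (x - fun _ => d)) i' := by
  have hdiff : ∀ k, (M *ᵥ x) k - ((M - of fun _ j => c j) *ᵥ (x - fun _ => d)) k
      = (∑ j, M k j) * d + (c ⬝ᵥ x - (∑ j, c j) * d) := by
    intro k
    simp only [mulVec, dotProduct, Matrix.sub_apply, of_apply, Pi.sub_apply, sub_mul, mul_sub,
      sum_sub_distrib, sum_mul]
    ring
  rw [hdiff, hdiff, h i i']

section ConsensusSeminorm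

variable (p : ℝ≥0∞) [Fact (1 ≤ p)]

lemma norm_mulVec_le_matPNorm_mul {n m : ℕ} (M : Matrix (Fin n) (Fin m) ℝ) (w : Fin m → ℝ) :
    ‖(WithLp.equiv p (Fin n → ℝ)).symm (M *ᵥ w)‖
      ≤ matPNorm p M * ‖(WithLp.equiv p (Fin m → ℝ)).symm w‖ := by
  simpa [matPNorm, toLin_basisFun_apply] using
    (LinearMap.toContinuousLinearMap
      (Matrix.toLin (PiLp.basisFun p ℝ (Fin m)) (PiLp.basisFun p ℝ (Fin n)) M)).le_opNorm
      ((WithLp.equiv p (Fin m → ℝ)).symm w)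

lemma matPNorm_nonneg {n m : ℕ} (M : Matrix (Fin n) (Fin m) ℝ) : 0 ≤ matPNorm p M :=
  norm_nonneg _

lemma metricSN_nonneg {n m : ℕ} (M : Matrix (Fin n) (Fin m) ℝ) : 0 ≤ metricSN p M :=
  Real.iInf_nonneg fun _ => matPNorm_nonneg p _

lemma vecSN_nonneg {m : ℕ} (x : Fin m → ℝ) : 0 ≤ vecSN p x :=
  Real.iInf_nonneg fun _ => norm_nonneg _

lemma vecSN_le_norm_sub_const {m : ℕ} (x : Fin m → ℝ) (c : ℝ) :
    vecSN p x ≤ ‖(WithLp.equiv p (Fin m → ℝ)).symm (x - fun _ => c)‖ :=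
  ciInf_le ⟨0, by rintro r ⟨c, rfl⟩; exact norm_nonneg _⟩ c

lemma vecSN_le_norm_of_sub_const {m : ℕ} {x z : Fin m → ℝ}
    (hxz : ∀ j j', x j - z j = x j' - z j') :
    vecSN p x ≤ ‖(WithLp.equiv p (Fin m → ℝ)).symm z‖ := by
  rcases isEmpty_or_nonempty (Fin m) with _ | ⟨⟨j₀⟩⟩
  · simpa [Subsingleton.elim z (x - fun _ => 0)] using vecSN_le_norm_sub_const p x 0
  · convert vecSN_le_norm_sub_const p x (x j₀ - z j₀) using 3
    ext j
    simp only [Pi.sub_apply]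
    linarith [hxz j j₀]

lemma vecSN_mulVec_le_metricSN_mul {n m : ℕ}
    {M : Matrix (Fin n) (Fin m) ℝ} (h : ∀ i i', ∑ j, M i j = ∑ j, M i' j) (x : Fin m → ℝ) :
    vecSN p (M *ᵥ x) ≤ metricSN p M * vecSN p x := by
  rw [metricSN, Real.iInf_mul_of_nonneg (vecSN_nonneg p x)]
  refine le_ciInf fun c => ?_
  rw [vecSN.eq_1 p x, Real.mul_iInf_of_nonneg (matPNorm_nonneg p _)]
  refine le_ciInf fun d => ?_
  calc vecSN p (M *ᵥ x)
      ≤ ‖(WithLp.equiv p (Fin n → ℝ)).symm ((M - of fun _ j => c j) *ᵥ (x - fun _ => d))‖ :=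
        vecSN_le_norm_of_sub_const p (mulVec_sub_mulVec_sub_const_apply_eq h c x d)
    _ ≤ matPNorm p (M - of fun _ j => c j)
          * ‖(WithLp.equiv p (Fin m → ℝ)).symm (x - fun _ => d)‖ :=
        norm_mulVec_le_matPNorm_mul p _ _

end ConsensusSeminorm

theorem inducedSN_le_metricSN_general (n m : ℕ)
    (p : ℝ≥0∞) [Fact (1 ≤ p)]
    (M : Matrix (Fin n) (Fin m) ℝ)
    (h : ∀ i i', ∑ j, M i j = ∑ j, M i' j) :
    inducedSN p M ≤ metricSN p M := by
  refine Real.sSup_le ?_ (metricSN_nonneg p M)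
  rintro r ⟨x, hx, rfl⟩
  simpa [hx] using vecSN_mulVec_le_metricSN_mul p h x

/-- For m, n > 1, p ∈ [1,∞], and M ∈ ℝ^{n×m} with all row sums equal,
the induced consensus seminorm satisfies ⟨M⟩_p ≤ |M|_p. -/
theorem inducedSN_le_metricSN (n m : ℕ) (hn : 1 < n) (hm : 1 < m)
    (p : ℝ≥0∞) [Fact (1 ≤ p)]
    (M : Matrix (Fin n) (Fin m) ℝ)
    (h : ∀ i i', ∑ j, M i j = ∑ j, M i' j) :
    inducedSN p M ≤ metricSN p M :=
  inducedSN_le_metricSN_general n m p M h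
end

section
/- Every stochastic matrix S ∈ ℝ^{n×n} that has at least one column all of whose entries are positive satisfies |S|_∞ < 1, where |·|_∞ is the metric consensus seminorm for p = ∞. -/
open Matrix Finset
open scoped ENNReal

/-! Let `j` be the positive column and `ε > 0` its smallest entry. Subtracting `ε` from column `j`
is subtracting the consensus matrix `𝟏 (ε eⱼ)ᵀ`, and leaves a nonnegative matrix whose rows all sum
to `1 - ε`; for `p = ∞` the induced norm is the maximal absolute row sum, so `|S|_∞ ≤ 1 - ε`. -/

section LinftyOpNorm

open scoped Matrix.Norms.Operator

lemma Matrix.linfty_opNorm_le_of_forall_sum_norm_le {α m n : Type*} [SeminormedAddCommGroup α]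
    [Fintype m] [Fintype n] (A : Matrix m n α) {C : ℝ} (hC : 0 ≤ C)
    (h : ∀ i, ∑ j, ‖A i j‖ ≤ C) : ‖A‖ ≤ C := by
  lift C to NNReal using hC
  rw [linfty_opNorm_def, NNReal.coe_le_coe, Finset.sup_le_iff]
  intro i _
  simpa [← NNReal.coe_le_coe] using h i

lemma matPNorm_top_eq_linfty_opNorm {n m : ℕ} (M : Matrix (Fin n) (Fin m) ℝ) :
    matPNorm ⊤ M = ‖M‖ := by
  apply le_antisymm
  · refine ContinuousLinearMap.opNorm_le_bound _ (norm_nonneg M) fun x => ?_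
    change ‖WithLp.toLp ⊤ (M *ᵥ WithLp.ofLp x)‖ ≤ ‖M‖ * ‖x‖
    rw [PiLp.norm_toLp, ← PiLp.norm_ofLp x]
    exact linfty_opNorm_mulVec M _
  · rw [linfty_opNorm_eq_opNorm]
    refine ContinuousLinearMap.opNorm_le_bound _ (norm_nonneg _) fun v => ?_
    set f := LinearMap.toContinuousLinearMap
      (Matrix.toLin (PiLp.basisFun ⊤ ℝ (Fin m)) (PiLp.basisFun ⊤ ℝ (Fin n)) M)
    calc ‖M *ᵥ v‖ = ‖f (WithLp.toLp ⊤ v)‖ := (PiLp.norm_toLp _).symm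
      _ ≤ ‖f‖ * ‖WithLp.toLp ⊤ v‖ := f.le_opNorm _
      _ = matPNorm ⊤ M * ‖v‖ := by rw [PiLp.norm_toLp]; rfl

end LinftyOpNorm

lemma metricSN_le_matPNorm (p : ℝ≥0∞) [Fact (1 ≤ p)] {n m : ℕ} (M : Matrix (Fin n) (Fin m) ℝ)
    (c : Fin m → ℝ) : metricSN p M ≤ matPNorm p (M - of fun _ j => c j) :=
  ciInf_le ⟨0, by rintro _ ⟨d, rfl⟩; exact norm_nonneg _⟩ c

lemma IsStochastic.sum_abs_sub_single_eq {n : ℕ} {S : Matrix (Fin n) (Fin n) ℝ}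
    (hS : IsStochastic S) {j : Fin n} {ε : ℝ} (hε : ∀ i, ε ≤ S i j) (i : Fin n) :
    ∑ k, |S i k - (Pi.single j ε : Fin n → ℝ) k| = 1 - ε := by
  have hnonneg : ∀ k, 0 ≤ S i k - (Pi.single j ε : Fin n → ℝ) k := by
    intro k
    rcases eq_or_ne k j with rfl | hk
    · simpa using hε i
    · simpa [hk] using hS.1 i k
  calc ∑ k, |S i k - (Pi.single j ε : Fin n → ℝ) k|
      = ∑ k, (S i k - (Pi.single j ε : Fin n → ℝ) k) :=
        sum_congr rfl fun k _ => abs_of_nonneg (hnonneg k)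
    _ = 1 - ε := by rw [sum_sub_distrib, hS.2 i, sum_pi_single']; simp

/-- Every stochastic matrix S ∈ ℝ^{n×n} with at least one entrywise
positive column satisfies |S|_∞ < 1 for the metric consensus seminorm. -/
theorem metricSN_infty_lt_one_of_positive_column (n : ℕ)
    (S : Matrix (Fin n) (Fin n) ℝ) (hS : IsStochastic S)
    (hcol : ∃ j, ∀ i, 0 < S i j) :
    metricSN ⊤ S < 1 := by
  obtain ⟨j, hj⟩ := hcol
  have : Nonempty (Fin n) := ⟨j⟩
  obtain ⟨i₀, hi₀⟩ := Finite.exists_min fun i => S i j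
  have hrow := hS.sum_abs_sub_single_eq hi₀
  open scoped Matrix.Norms.Operator in
  calc metricSN ⊤ S ≤ matPNorm ⊤ (S - of fun _ => Pi.single j (S i₀ j)) :=
        metricSN_le_matPNorm ⊤ S _
    _ = ‖S - of fun _ => Pi.single j (S i₀ j)‖ := matPNorm_top_eq_linfty_opNorm _
    _ ≤ 1 - S i₀ j := linfty_opNorm_le_of_forall_sum_norm_le _
        (hrow i₀ ▸ sum_nonneg fun _ _ => abs_nonneg _) fun i => (hrow i).le
    _ < 1 := sub_lt_self 1 (hj i₀)
end
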